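/- Let n ≥ 1 and let π : ℝⁿ → Mₙ(ℝ) be a smooth matrix-valued map. Then Sol(π) is coisotropic (in the sense defined in the context) if and only if π is a Poisson bivector field, i.e. the matrix π(x) is skew-symmetric for every x ∈ ℝⁿ and the Jacobi identity Σ_{r=1}^n ( π^{rs}(x) ∂_r π^{lk}(x) + π^{rk}(x) ∂_r π^{sl}(x) + π^{rl}(x) ∂_r π^{ks}(x) ) = 0 holds for all x ∈ ℝⁿ and all indices s, l, k. -/

import Mathlib

open MeasureTheory Set

/-- Partial derivative `∂_r f(x)` of a function `f : ℝⁿ → ℝ` in the `r`-th coordinate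
direction. -/
noncomputable def pd {n : ℕ} (f : (Fin n → ℝ) → ℝ) (r : Fin n) (x : Fin n → ℝ) : ℝ :=
  fderiv ℝ f x (Pi.single r 1)

/-- `(X, η)` (with `X'` the derivative of `X`) is an element of `Sol(π)`:
`X : [0,1] → ℝⁿ` is continuously differentiable, `η : [0,1] → ℝⁿ` is continuous, and
`(X')ⁱ(u) + Σ_j η_j(u) π^{ji}(X(u)) = 0` on `[0,1]`. -/
def IsSol {n : ℕ} (π : (Fin n → ℝ) → Fin n → Fin n → ℝ)
    (X X' η : ℝ → Fin n → ℝ) : Prop :=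
  ContinuousOn X' (Icc 0 1) ∧ ContinuousOn η (Icc 0 1) ∧
  (∀ u ∈ Icc (0:ℝ) 1, HasDerivWithinAt X (X' u) (Icc 0 1) u) ∧
  (∀ u ∈ Icc (0:ℝ) 1, ∀ i, X' u i + ∑ j, η u j * π (X u) j i = 0)

/-- `(ξ, e)` (with `ξ'` the derivative of `ξ`) is an element of the tangent space
`Tan(X,η)`: `ξ` is continuously differentiable, `e` is continuous, and the linearized
equation `(ξ')ⁱ + Σ_{j,l} η_j ∂_l π^{ji}(X) ξˡ + Σ_j e_j π^{ji}(X) = 0` holds on `[0,1]`. -/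
def IsTan {n : ℕ} (π : (Fin n → ℝ) → Fin n → Fin n → ℝ)
    (X η ξ ξ' e : ℝ → Fin n → ℝ) : Prop :=
  ContinuousOn ξ' (Icc 0 1) ∧ ContinuousOn e (Icc 0 1) ∧
  (∀ u ∈ Icc (0:ℝ) 1, HasDerivWithinAt ξ (ξ' u) (Icc 0 1) u) ∧
  (∀ u ∈ Icc (0:ℝ) 1, ∀ i,
    ξ' u i + (∑ j, ∑ l, η u j * pd (fun y => π y j i) l (X u) * ξ u l)
      + ∑ j, e u j * π (X u) j i = 0)

/-- The pairing `Ω((ξ,e),(ξ̃,ẽ)) = ∫₀¹ Σ_i ( e_i(u) ξ̃ⁱ(u) − ẽ_i(u) ξⁱ(u) ) du`. -/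
noncomputable def OmegaFd {n : ℕ} (ξ e ξt et : ℝ → Fin n → ℝ) : ℝ :=
  ∫ u in (0:ℝ)..(1:ℝ), ∑ i, (e u i * ξt u i - et u i * ξ u i)

/-- `Sol(π)` is coisotropic: for every solution `(X,η)`, every continuously
differentiable `ξ̃` and continuous `ẽ` with `Ω((ξ,e),(ξ̃,ẽ)) = 0` for all
`(ξ,e) ∈ Tan(X,η)` belong to `Tan(X,η)`. -/
def SolCoisotropic {n : ℕ} (π : (Fin n → ℝ) → Fin n → Fin n → ℝ) : Prop :=
  ∀ X X' η : ℝ → Fin n → ℝ, IsSol π X X' η →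
    ∀ ξt ξt' et : ℝ → Fin n → ℝ,
      ContinuousOn ξt' (Icc 0 1) → ContinuousOn et (Icc 0 1) →
      (∀ u ∈ Icc (0:ℝ) 1, HasDerivWithinAt ξt (ξt' u) (Icc 0 1) u) →
      (∀ ξ ξ' e : ℝ → Fin n → ℝ, IsTan π X η ξ ξ' e → OmegaFd ξ e ξt et = 0) →
      IsTan π X η ξt ξt' et

variable {n : ℕ}

lemma entry_contDiff {π : (Fin n → ℝ) → Fin n → Fin n → ℝ} (hπ : ContDiff ℝ (⊤ : ℕ∞) π) (j i : Fin n) :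
    ContDiff ℝ (⊤ : ℕ∞) fun y => π y j i :=
  (contDiff_pi.mp ((contDiff_pi.mp hπ) j)) i

lemma pd_continuous {f : (Fin n → ℝ) → ℝ} (hf : ContDiff ℝ (⊤ : ℕ∞) f) (r : Fin n) :
    Continuous (pd f r) :=
  (hf.continuous_fderiv (by simp)).clm_apply continuous_const

lemma fderiv_apply_eq_sum_pd (f : (Fin n → ℝ) → ℝ) (x v : Fin n → ℝ) :
    fderiv ℝ f x v = ∑ r, pd f r x * v r := by
  conv_lhs => rw [pi_eq_sum_univ v]
  rw [map_sum]
  refine Finset.sum_congr rfl fun r _ => ?_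
  have h : (fun j => if r = j then (1:ℝ) else 0) = Pi.single r 1 := by
    funext j; simp [Pi.single_apply, eq_comm]
  rw [h, (fderiv ℝ f x).map_smul]
  simp [pd, smul_eq_mul, mul_comm]

lemma comp_entry_hasDerivWithinAt {f : (Fin n → ℝ) → ℝ} (hf : ContDiff ℝ (⊤ : ℕ∞) f)
    {X : ℝ → Fin n → ℝ} {V : Fin n → ℝ} {u : ℝ} {s : Set ℝ}
    (hX : HasDerivWithinAt X V s u) :
    HasDerivWithinAt (fun v => f (X v)) (∑ r, pd f r (X u) * V r) s u := by
  have h1 : HasFDerivAt f (fderiv ℝ f (X u)) (X u) :=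
    (hf.differentiable (by simp) (X u)).hasFDerivAt
  have h2 := h1.comp_hasDerivWithinAt u hX
  rwa [fderiv_apply_eq_sum_pd] at h2
open Finset in
lemma swap1 {n : ℕ} (a : Fin n → Fin n → ℝ) (x y : Fin n → ℝ) :
    ∑ i, x i * ∑ l, a i l * y l = ∑ i, y i * ∑ j, x j * a j i := by
  simp_rw [Finset.mul_sum]
  rw [Finset.sum_comm]
  exact Finset.sum_congr rfl fun l _ => Finset.sum_congr rfl fun i _ => by ring

open Finset in
lemma swap2 {n : ℕ} (w : Fin n → Fin n → Fin n → ℝ) (g y : Fin n → ℝ) :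
    ∑ i, (∑ l, (∑ k, w k l i) * g l) * y i = ∑ i, g i * (∑ j, ∑ l, w j i l * y l) := by
  simp_rw [Finset.sum_mul, Finset.mul_sum]
  -- LHS: ∑ i ∑ l ∑ k, w k l i * g l * y i ; RHS: ∑ i ∑ j ∑ l, g i * (w j i l * y l)
  rw [Finset.sum_comm]
  exact Finset.sum_congr rfl fun l _ => Finset.sum_comm.trans <|
    Finset.sum_congr rfl fun k _ => Finset.sum_congr rfl fun i _ => by ring

lemma omega_alg {n : ℕ} (a : Fin n → Fin n → ℝ) (w : Fin n → Fin n → Fin n → ℝ)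
    (g g' y ee : Fin n → ℝ) :
    ∑ i, (ee i * (-∑ l, a i l * g l) - ((∑ l, (∑ k, w k l i) * g l) - g' i) * y i)
      = ∑ i, (g' i * y i + g i * ((-(∑ j, ∑ l, w j i l * y l)) - ∑ j, ee j * a j i)) := by
  have h1 := swap1 a ee g
  have h2 := swap2 w g y
  simp only [mul_neg, sub_mul, mul_sub, Finset.sum_sub_distrib, Finset.sum_add_distrib,
    Finset.sum_neg_distrib]
  linarith [h1, h2]

lemma sum_rot {n : ℕ} (F : Fin n → Fin n → Fin n → ℝ) :
    ∑ a, ∑ b, ∑ c, F a b c = ∑ c, ∑ a, ∑ b, F a b c :=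
  (Finset.sum_congr rfl fun _ _ => Finset.sum_comm).trans Finset.sum_comm

lemma tangent_algebra {n : ℕ} (a : Fin n → Fin n → ℝ) (d : Fin n → Fin n → Fin n → ℝ)
    (h g g' : Fin n → ℝ) (i : Fin n)
    (skewa : ∀ p q, a p q = -a q p) (skewd : ∀ p q r, d p q r = -d q p r)
    (jac : ∀ s lI kI, ∑ r, (a r s * d lI kI r + a r kI * d s lI r + a r lI * d kI s r) = 0) :
    (-∑ l, ((∑ r, d i l r * (-∑ k, h k * a k r)) * g l + a i l * g' l))
      + (∑ j, ∑ l, h j * d j i l * (-(∑ m, a l m * g m)))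
      + ∑ j, ((∑ l, (∑ k, h k * d k l j) * g l) - g' j) * a j i = 0 := by
  have hA : (-∑ l, ((∑ r, d i l r * (-∑ k, h k * a k r)) * g l + a i l * g' l))
      = (∑ l, (∑ k, h k * ∑ r, a k r * d i l r) * g l) - ∑ l, a i l * g' l := by
    rw [Finset.sum_add_distrib, neg_add, ← sub_eq_add_neg]
    congr 1
    rw [← Finset.sum_neg_distrib]
    refine Finset.sum_congr rfl fun l _ => ?_
    rw [← neg_mul]
    congr 1
    simp_rw [mul_neg, Finset.sum_neg_distrib, neg_neg, Finset.mul_sum]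
    rw [Finset.sum_comm]
    exact Finset.sum_congr rfl fun k _ => Finset.sum_congr rfl fun r _ => by ring
  have hB : (∑ j, ∑ l, h j * d j i l * (-(∑ m, a l m * g m)))
      = -∑ l, (∑ k, h k * ∑ r, d k i r * a r l) * g l := by
    simp_rw [mul_neg, Finset.mul_sum, Finset.sum_neg_distrib, Finset.sum_mul, neg_inj]
    rw [sum_rot (fun j l m => h j * d j i l * (a l m * g m))]
    exact Finset.sum_congr rfl fun m _ => Finset.sum_congr rfl fun j _ =>
      Finset.sum_congr rfl fun l _ => by ring
  have hC : (∑ j, ((∑ l, (∑ k, h k * d k l j) * g l) - g' j) * a j i)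
      = (∑ l, (∑ k, h k * ∑ r, d k l r * a r i) * g l) - ∑ l, a l i * g' l := by
    simp_rw [sub_mul, Finset.sum_sub_distrib, Finset.sum_mul, Finset.mul_sum]
    congr 1
    · rw [sum_rot (fun j l k => h k * d k l j * g l * a j i),
        sum_rot (fun k j l => h k * d k l j * g l * a j i)]
      exact Finset.sum_congr rfl fun l _ => Finset.sum_congr rfl fun k _ => by
        rw [Finset.sum_mul]; exact Finset.sum_congr rfl fun j _ => by ring
    · exact Finset.sum_congr rfl fun j _ => by ring
  rw [hA, hB, hC]
  have e1 : (∑ l, (∑ k, h k * ∑ r, a k r * d i l r) * g l)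
      - (∑ l, (∑ k, h k * ∑ r, d k i r * a r l) * g l)
      + (∑ l, (∑ k, h k * ∑ r, d k l r * a r i) * g l) = 0 := by
    rw [← Finset.sum_sub_distrib, ← Finset.sum_add_distrib]
    refine Finset.sum_eq_zero fun l _ => ?_
    have hin : (∑ k, h k * ∑ r, a k r * d i l r) - (∑ k, h k * ∑ r, d k i r * a r l)
        + (∑ k, h k * ∑ r, d k l r * a r i) = 0 := by
      rw [← Finset.sum_sub_distrib, ← Finset.sum_add_distrib]
      refine Finset.sum_eq_zero fun k _ => ?_
      rw [← mul_sub, ← mul_add]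
      have hz : (∑ r, a k r * d i l r) - (∑ r, d k i r * a r l)
          + (∑ r, d k l r * a r i) = 0 := by
        rw [← Finset.sum_sub_distrib, ← Finset.sum_add_distrib]
        rw [show (∑ r, (a k r * d i l r - d k i r * a r l + d k l r * a r i))
            = ∑ r, (a r k * d l i r + a r i * d k l r + a r l * d i k r) from
          Finset.sum_congr rfl fun r _ => by
            rw [skewa k r, skewd i l r, skewd k i r]; ring]
        exact jac k l i
      rw [hz, mul_zero]
    rw [← sub_mul, ← add_mul, hin, zero_mul]
  have e2 : (∑ l, a i l * g' l) + (∑ l, a l i * g' l) = 0 := by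
    rw [← Finset.sum_add_distrib]
    refine Finset.sum_eq_zero fun l _ => ?_
    rw [skewa i l]; ring
  linarith
open MeasureTheory Set

lemma ftc_icc {F D : ℝ → ℝ} (hD : ContinuousOn D (Icc 0 1))
    (hF : ∀ u ∈ Icc (0:ℝ) 1, HasDerivWithinAt F (D u) (Icc 0 1) u) :
    ∫ u in (0:ℝ)..1, D u = F 1 - F 0 := by
  refine intervalIntegral.integral_eq_sub_of_hasDeriv_right_of_le zero_le_one
    (fun u hu => (hF u hu).continuousWithinAt) (fun u hu => ?_)
    (hD.intervalIntegrable_of_Icc zero_le_one)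
  exact ((hF u (Ioo_subset_Icc_self hu)).hasDerivAt (Icc_mem_nhds hu.1 hu.2)).hasDerivWithinAt

lemma pairing_deriv {n : ℕ} {G G' ξ ξ' : ℝ → Fin n → ℝ}
    (hG : ∀ u ∈ Icc (0:ℝ) 1, HasDerivWithinAt G (G' u) (Icc 0 1) u)
    (hξ : ∀ u ∈ Icc (0:ℝ) 1, HasDerivWithinAt ξ (ξ' u) (Icc 0 1) u) :
    ∀ u ∈ Icc (0:ℝ) 1, HasDerivWithinAt (fun v => ∑ i, G v i * ξ v i)
      (∑ i, (G' u i * ξ u i + G u i * ξ' u i)) (Icc 0 1) u := fun u hu =>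
  HasDerivWithinAt.fun_sum fun i _ =>
    ((hasDerivWithinAt_pi.mp (hG u hu)) i).mul ((hasDerivWithinAt_pi.mp (hξ u hu)) i)

lemma dbr_pos {f : ℝ → ℝ} (hf : ContinuousOn f (Icc 0 1))
    (H : ∀ φ φd : ℝ → ℝ, ContinuousOn φd (Icc 0 1) →
      (∀ u ∈ Icc (0:ℝ) 1, HasDerivWithinAt φ (φd u) (Icc 0 1) u) →
      φ 0 = 0 → φ 1 = 0 → (∫ u in (0:ℝ)..1, φ u * f u) = 0)
    {u₀ : ℝ} (hu₀ : u₀ ∈ Ioo (0:ℝ) 1) : ¬ (0 < f u₀) := by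
  intro hpos
  have hcw : ContinuousWithinAt f (Icc 0 1) u₀ := hf u₀ (Ioo_subset_Icc_self hu₀)
  have hev : {u | f u₀ / 2 < f u} ∈ nhdsWithin u₀ (Icc 0 1) :=
    hcw (lt_mem_nhds (by linarith))
  obtain ⟨δ, δpos, hδ⟩ := Metric.mem_nhdsWithin_iff.mp hev
  set r := min δ (min u₀ (1 - u₀)) with hr
  have hru : r ≤ u₀ := le_trans (min_le_right _ _) (min_le_left _ _)
  have hru1 : r ≤ 1 - u₀ := le_trans (min_le_right _ _) (min_le_right _ _)
  have hrδ : r ≤ δ := min_le_left _ _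
  have hrpos : 0 < r := lt_min δpos (lt_min hu₀.1 (by linarith [hu₀.2]))
  set φb : ContDiffBump u₀ := ⟨r/2, r, by positivity, by linarith⟩ with hφb
  have hφcont : Continuous (φb : ℝ → ℝ) := φb.continuous
  have hφd : ∀ u ∈ Icc (0:ℝ) 1, HasDerivWithinAt (φb : ℝ → ℝ) (deriv (φb : ℝ → ℝ) u) (Icc 0 1) u :=
    fun u _ => (((φb.contDiff (n := 1)).differentiable (by simp)) u).hasDerivAt.hasDerivWithinAt
  have hφdc : ContinuousOn (deriv (φb : ℝ → ℝ)) (Icc 0 1) :=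
    ((φb.contDiff (n := (⊤ : ℕ∞))).continuous_deriv (by exact_mod_cast le_top)).continuousOn
  have hφ0 : (φb : ℝ → ℝ) 0 = 0 := φb.zero_of_le_dist (by
    rw [Real.dist_eq]; rw [abs_of_nonpos (by linarith [hu₀.1])]; simp; linarith [hu₀.1])
  have hφ1 : (φb : ℝ → ℝ) 1 = 0 := φb.zero_of_le_dist (by
    rw [Real.dist_eq]; rw [abs_of_nonneg (by linarith [hu₀.2])]; linarith)
  have hint : (∫ u in (0:ℝ)..1, (φb : ℝ → ℝ) u * f u) = 0 :=
    H _ _ hφdc hφd hφ0 hφ1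
  -- pointwise bound
  have key : ∀ u ∈ Icc (0:ℝ) 1, f u₀ / 2 * (φb : ℝ → ℝ) u ≤ (φb : ℝ → ℝ) u * f u := by
    intro u hu
    by_cases hb : u ∈ Metric.ball u₀ r
    · have h1 : f u₀ / 2 < f u := hδ ⟨Metric.ball_subset_ball hrδ hb, hu⟩
      nlinarith [φb.nonneg (x := u)]
    · have h0 : (φb : ℝ → ℝ) u = 0 :=
        φb.zero_of_le_dist (le_of_not_gt (fun hc => hb (Metric.mem_ball.mpr hc)))
      rw [h0]; simp
  have hi1 : IntervalIntegrable (fun u => f u₀ / 2 * (φb : ℝ → ℝ) u) volume 0 1 :=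
    (continuous_const.mul hφcont).intervalIntegrable _ _
  have hi2 : IntervalIntegrable (fun u => (φb : ℝ → ℝ) u * f u) volume 0 1 :=
    ((hφcont.continuousOn.mul hf).intervalIntegrable_of_Icc zero_le_one)
  have hmono := intervalIntegral.integral_mono_on zero_le_one hi1 hi2 key
  -- positivity of ∫ φ
  have hii : ∀ a b : ℝ, IntervalIntegrable (fun u => (φb : ℝ → ℝ) u) volume a b :=
    fun a b => hφcont.intervalIntegrable _ _
  have hsplit : (∫ u in (0:ℝ)..1, (φb : ℝ → ℝ) u)
      = (∫ u in (0:ℝ)..(u₀ - r/2), (φb : ℝ → ℝ) u)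
        + ((∫ u in (u₀ - r/2)..(u₀ + r/2), (φb : ℝ → ℝ) u)
          + (∫ u in (u₀ + r/2)..(1:ℝ), (φb : ℝ → ℝ) u)) := by
    rw [intervalIntegral.integral_add_adjacent_intervals (hii _ _) (hii _ _),
      intervalIntegral.integral_add_adjacent_intervals (hii _ _) (hii _ _)]
  have hmid : (∫ u in (u₀ - r/2)..(u₀ + r/2), (φb : ℝ → ℝ) u) = r := by
    rw [intervalIntegral.integral_congr (g := fun _ => (1:ℝ)) ?_]
    · rw [show (fun _ : ℝ => (1:ℝ)) = fun _ => 1 from rfl, intervalIntegral.integral_const]; simp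
    · intro u hu
      rw [uIcc_of_le (by linarith)] at hu
      exact φb.one_of_mem_closedBall (by
        rw [Real.closedBall_eq_Icc]; exact hu)
  have h01 : (0:ℝ) ≤ u₀ - r/2 := by linarith
  have h02 : u₀ + r/2 ≤ 1 := by linarith
  have hnn1 : 0 ≤ ∫ u in (0:ℝ)..(u₀ - r/2), (φb : ℝ → ℝ) u :=
    intervalIntegral.integral_nonneg h01 (fun u _ => φb.nonneg)
  have hnn2 : 0 ≤ ∫ u in (u₀ + r/2)..(1:ℝ), (φb : ℝ → ℝ) u :=
    intervalIntegral.integral_nonneg h02 (fun u _ => φb.nonneg)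
  have hφint_pos : 0 < ∫ u in (0:ℝ)..1, (φb : ℝ → ℝ) u := by
    rw [hsplit, hmid]; linarith
  rw [hint, intervalIntegral.integral_const_mul] at hmono
  nlinarith

lemma dbr {f : ℝ → ℝ} (hf : ContinuousOn f (Icc 0 1))
    (H : ∀ φ φd : ℝ → ℝ, ContinuousOn φd (Icc 0 1) →
      (∀ u ∈ Icc (0:ℝ) 1, HasDerivWithinAt φ (φd u) (Icc 0 1) u) →
      φ 0 = 0 → φ 1 = 0 → (∫ u in (0:ℝ)..1, φ u * f u) = 0) :
    ∀ u ∈ Icc (0:ℝ) 1, f u = 0 := by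
  have Hneg : ∀ φ φd : ℝ → ℝ, ContinuousOn φd (Icc 0 1) →
      (∀ u ∈ Icc (0:ℝ) 1, HasDerivWithinAt φ (φd u) (Icc 0 1) u) →
      φ 0 = 0 → φ 1 = 0 → (∫ u in (0:ℝ)..1, φ u * (-f u)) = 0 := by
    intro φ φd h1 h2 h3 h4
    simp_rw [mul_neg]
    rw [intervalIntegral.integral_neg, H φ φd h1 h2 h3 h4, neg_zero]
  have hIoo : ∀ u ∈ Ioo (0:ℝ) 1, f u = 0 := by
    intro u hu
    have h1 := dbr_pos hf H hu
    have h2 := dbr_pos (hf.neg) Hneg hu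
    simp only [Pi.neg_apply] at h2
    by_contra hne
    rcases lt_or_gt_of_ne hne with hlt | hgt
    · exact h2 (by simpa using hlt)
    · exact h1 hgt
  intro u hu
  have hclos : u ∈ closure (Ioo (0:ℝ) 1) := by
    rw [closure_Ioo (by norm_num : (0:ℝ) ≠ 1)]; exact hu
  have hne : (nhdsWithin u (Ioo (0:ℝ) 1)).NeBot := mem_closure_iff_nhdsWithin_neBot.mp hclos
  have t1 : Filter.Tendsto f (nhdsWithin u (Ioo (0:ℝ) 1)) (nhds (f u)) :=
    (hf u hu).mono Ioo_subset_Icc_self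
  have t2 : Filter.Tendsto f (nhdsWithin u (Ioo (0:ℝ) 1)) (nhds 0) := by
    refine Filter.Tendsto.congr' ?_ tendsto_const_nhds
    filter_upwards [self_mem_nhdsWithin] with v hv
    exact (hIoo v hv).symm
  exact tendsto_nhds_unique t1 t2

section Core

variable {n : ℕ}

/-- The special tangent-vector family `ξ_G = -π(X)G`. -/
noncomputable def xiG (π : (Fin n → ℝ) → Fin n → Fin n → ℝ) (X G : ℝ → Fin n → ℝ) :
    ℝ → Fin n → ℝ := fun u i => -∑ l, π (X u) i l * G u l

/-- Derivative of `ξ_G`. -/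
noncomputable def xiGd (π : (Fin n → ℝ) → Fin n → Fin n → ℝ) (X X' G G' : ℝ → Fin n → ℝ) :
    ℝ → Fin n → ℝ := fun u i =>
  -∑ l, ((∑ r, pd (fun y => π y i l) r (X u) * X' u r) * G u l + π (X u) i l * G' u l)

/-- The accompanying `e_G = Bᵀ G - G'`. -/
noncomputable def eG (π : (Fin n → ℝ) → Fin n → Fin n → ℝ) (X η G G' : ℝ → Fin n → ℝ) :
    ℝ → Fin n → ℝ := fun u j =>
  (∑ l, (∑ k, η u k * pd (fun y => π y k l) j (X u)) * G u l) - G' u j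

variable {π : (Fin n → ℝ) → Fin n → Fin n → ℝ} {X X' η G G' : ℝ → Fin n → ℝ}

lemma cont_xiG (hπ : ContDiff ℝ (⊤ : ℕ∞) π) (hXc : ContinuousOn X (Icc 0 1))
    (hGc : ContinuousOn G (Icc 0 1)) : ContinuousOn (xiG π X G) (Icc 0 1) := by
  refine continuousOn_pi.mpr fun i => ?_
  refine (continuousOn_finset_sum _ fun l _ => ?_).neg
  exact ((entry_contDiff hπ i l).continuous.comp_continuousOn hXc).mul
    ((continuousOn_pi.mp hGc) l)

lemma cont_xiGd (hπ : ContDiff ℝ (⊤ : ℕ∞) π) (hXc : ContinuousOn X (Icc 0 1))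
    (hX'c : ContinuousOn X' (Icc 0 1)) (hGc : ContinuousOn G (Icc 0 1))
    (hG'c : ContinuousOn G' (Icc 0 1)) : ContinuousOn (xiGd π X X' G G') (Icc 0 1) := by
  refine continuousOn_pi.mpr fun i => ?_
  refine (continuousOn_finset_sum _ fun l _ => ?_).neg
  refine ContinuousOn.add (ContinuousOn.mul ?_ ((continuousOn_pi.mp hGc) l))
    (((entry_contDiff hπ i l).continuous.comp_continuousOn hXc).mul
      ((continuousOn_pi.mp hG'c) l))
  exact continuousOn_finset_sum _ fun r _ =>
    ((pd_continuous (entry_contDiff hπ i l) r).comp_continuousOn hXc).mul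
      ((continuousOn_pi.mp hX'c) r)

lemma cont_eG (hπ : ContDiff ℝ (⊤ : ℕ∞) π) (hXc : ContinuousOn X (Icc 0 1))
    (hηc : ContinuousOn η (Icc 0 1)) (hGc : ContinuousOn G (Icc 0 1))
    (hG'c : ContinuousOn G' (Icc 0 1)) : ContinuousOn (eG π X η G G') (Icc 0 1) := by
  refine continuousOn_pi.mpr fun j => ?_
  refine ContinuousOn.sub (continuousOn_finset_sum _ fun l _ => ?_) ((continuousOn_pi.mp hG'c) j)
  refine ContinuousOn.mul (continuousOn_finset_sum _ fun k _ => ?_) ((continuousOn_pi.mp hGc) l)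
  exact ((continuousOn_pi.mp hηc) k).mul
    ((pd_continuous (entry_contDiff hπ k l) j).comp_continuousOn hXc)

lemma hasDeriv_xiG (hπ : ContDiff ℝ (⊤ : ℕ∞) π)
    (hX : ∀ u ∈ Icc (0:ℝ) 1, HasDerivWithinAt X (X' u) (Icc 0 1) u)
    (hG : ∀ u ∈ Icc (0:ℝ) 1, HasDerivWithinAt G (G' u) (Icc 0 1) u) :
    ∀ u ∈ Icc (0:ℝ) 1, HasDerivWithinAt (xiG π X G) (xiGd π X X' G G' u) (Icc 0 1) u := by
  intro u hu
  refine hasDerivWithinAt_pi.mpr fun i => ?_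
  refine HasDerivWithinAt.neg (HasDerivWithinAt.fun_sum fun l _ => ?_)
  exact (comp_entry_hasDerivWithinAt (entry_contDiff hπ i l) (hX u hu)).mul
    ((hasDerivWithinAt_pi.mp (hG u hu)) l)

lemma omega_alg2 {n : ℕ} (a : Fin n → Fin n → ℝ) (w : Fin n → Fin n → Fin n → ℝ)
    (g g' xt xt' et : Fin n → ℝ) :
    ∑ i, (((∑ l, (∑ k, w k l i) * g l) - g' i) * xt i - et i * (-∑ l, a i l * g l))
      = (∑ l, g l * (xt' l + (∑ j, ∑ i, w j l i * xt i) + ∑ j, et j * a j l))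
        - ∑ i, (g' i * xt i + g i * xt' i) := by
  have h1 := swap1 a et g
  have h2 := swap2 w g xt
  simp only [mul_neg, sub_mul, mul_sub, mul_add, Finset.sum_sub_distrib, Finset.sum_add_distrib,
    Finset.sum_neg_distrib]
  linarith [h1, h2]

/-- Forward pairing formula: for any tangent vector `(ξ, e)`,
`Ω((ξ,e),(ξ_G,e_G)) = ⟨G,ξ⟩|₀¹`. -/
lemma omega_fwd (hsol : IsSol π X X' η) {ξ ξ' e : ℝ → Fin n → ℝ}
    (htan : IsTan π X η ξ ξ' e)
    (hG'c : ContinuousOn G' (Icc 0 1))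
    (hG : ∀ u ∈ Icc (0:ℝ) 1, HasDerivWithinAt G (G' u) (Icc 0 1) u) :
    OmegaFd ξ e (xiG π X G) (eG π X η G G')
      = (∑ i, G 1 i * ξ 1 i) - ∑ i, G 0 i * ξ 0 i := by
  unfold OmegaFd
  have hGc : ContinuousOn G (Icc 0 1) := fun u hu => (hG u hu).continuousWithinAt
  have hξc : ContinuousOn ξ (Icc 0 1) := fun u hu => (htan.2.2.1 u hu).continuousWithinAt
  have hEq : EqOn (fun u => ∑ i, (e u i * xiG π X G u i - eG π X η G G' u i * ξ u i))
      (fun u => ∑ i, (G' u i * ξ u i + G u i * ξ' u i)) (uIcc (0:ℝ) 1) := by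
    rw [uIcc_of_le zero_le_one]
    intro u hu
    have tan : ∀ i, ξ' u i
        = (-(∑ j, ∑ l, η u j * pd (fun y => π y j i) l (X u) * ξ u l))
          - ∑ j, e u j * π (X u) j i := fun i => by
      have := htan.2.2.2 u hu i; linarith
    have halg := omega_alg (π (X u))
      (fun p q r => η u p * pd (fun y => π y p q) r (X u)) (G u) (G' u) (ξ u) (e u)
    simp only [xiG, eG]
    rw [halg]
    exact Finset.sum_congr rfl fun i _ => by rw [← tan i]
  rw [intervalIntegral.integral_congr hEq]
  refine ftc_icc ?_ (pairing_deriv hG htan.2.2.1)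
  exact continuousOn_finset_sum _ fun i _ =>
    (((continuousOn_pi.mp hG'c) i).mul ((continuousOn_pi.mp hξc) i)).add
      (((continuousOn_pi.mp hGc) i).mul ((continuousOn_pi.mp htan.1) i))

/-- Backward pairing formula. -/
lemma omega_bwd (hπ : ContDiff ℝ (⊤ : ℕ∞) π) (hsol : IsSol π X X' η) {ξt ξt' et : ℝ → Fin n → ℝ}
    (hξt'c : ContinuousOn ξt' (Icc 0 1)) (hetc : ContinuousOn et (Icc 0 1))
    (hξt : ∀ u ∈ Icc (0:ℝ) 1, HasDerivWithinAt ξt (ξt' u) (Icc 0 1) u)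
    (hG'c : ContinuousOn G' (Icc 0 1))
    (hG : ∀ u ∈ Icc (0:ℝ) 1, HasDerivWithinAt G (G' u) (Icc 0 1) u) :
    OmegaFd (xiG π X G) (eG π X η G G') ξt et
      = (∫ u in (0:ℝ)..1, ∑ l, G u l * (ξt' u l
            + (∑ j, ∑ i, η u j * pd (fun y => π y j l) i (X u) * ξt u i)
            + ∑ j, et u j * π (X u) j l))
        - ((∑ i, G 1 i * ξt 1 i) - ∑ i, G 0 i * ξt 0 i) := by
  unfold OmegaFd
  have hGc : ContinuousOn G (Icc 0 1) := fun u hu => (hG u hu).continuousWithinAt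
  have hXc : ContinuousOn X (Icc 0 1) := fun u hu => (hsol.2.2.1 u hu).continuousWithinAt
  have hξtc : ContinuousOn ξt (Icc 0 1) := fun u hu => (hξt u hu).continuousWithinAt
  have hEq : (fun u => ∑ i, (eG π X η G G' u i * ξt u i - et u i * xiG π X G u i))
      = fun u => (∑ l, G u l * (ξt' u l
            + (∑ j, ∑ i, η u j * pd (fun y => π y j l) i (X u) * ξt u i)
            + ∑ j, et u j * π (X u) j l))
          - ∑ i, (G' u i * ξt u i + G u i * ξt' u i) := by
    funext u
    have halg := omega_alg2 (π (X u))
      (fun p q r => η u p * pd (fun y => π y p q) r (X u)) (G u) (G' u) (ξt u) (ξt' u) (et u)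
    simp only [xiG, eG]
    exact halg
  rw [hEq]
  have hint1 : IntervalIntegrable (fun u => ∑ l, G u l * (ξt' u l
      + (∑ j, ∑ i, η u j * pd (fun y => π y j l) i (X u) * ξt u i)
      + ∑ j, et u j * π (X u) j l)) volume 0 1 := by
    refine ContinuousOn.intervalIntegrable_of_Icc zero_le_one ?_
    refine continuousOn_finset_sum _ fun l _ => ContinuousOn.mul ((continuousOn_pi.mp hGc) l) ?_
    refine ContinuousOn.add (ContinuousOn.add ((continuousOn_pi.mp hξt'c) l) ?_) ?_
    · refine continuousOn_finset_sum _ fun j _ => continuousOn_finset_sum _ fun i _ => ?_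
      exact (((continuousOn_pi.mp hsol.2.1) j).mul
        ((pd_continuous (entry_contDiff hπ j l) i).comp_continuousOn hXc)).mul
        ((continuousOn_pi.mp hξtc) i)
    · refine continuousOn_finset_sum _ fun j _ => ?_
      exact ((continuousOn_pi.mp hetc) j).mul
        ((entry_contDiff hπ j l).continuous.comp_continuousOn hXc)
  have hint2 : IntervalIntegrable (fun u => ∑ i, (G' u i * ξt u i + G u i * ξt' u i))
      volume 0 1 := by
    refine ContinuousOn.intervalIntegrable_of_Icc zero_le_one ?_
    exact continuousOn_finset_sum _ fun i _ =>
      (((continuousOn_pi.mp hG'c) i).mul ((continuousOn_pi.mp hξtc) i)).add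
        (((continuousOn_pi.mp hGc) i).mul ((continuousOn_pi.mp hξt'c) i))
  rw [intervalIntegral.integral_sub hint1 hint2]
  congr 1
  refine ftc_icc ?_ (pairing_deriv hG hξt)
  exact continuousOn_finset_sum _ fun i _ =>
    (((continuousOn_pi.mp hG'c) i).mul ((continuousOn_pi.mp hξtc) i)).add
      (((continuousOn_pi.mp hGc) i).mul ((continuousOn_pi.mp hξt'c) i))

end Core

section Tan

variable {n : ℕ} {π : (Fin n → ℝ) → Fin n → Fin n → ℝ} {X X' η G G' : ℝ → Fin n → ℝ}

lemma pd_skew (hskew : ∀ y p q, π y p q = -π y q p) (i j r : Fin n) (x : Fin n → ℝ) :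
    pd (fun y => π y i j) r x = -pd (fun y => π y j i) r x := by
  have h : (fun y => π y i j) = fun y => -(π y j i) := funext fun y => hskew y i j
  unfold pd
  rw [h, fderiv_fun_neg]
  simp

/-- Under the Poisson assumptions, `(ξ_G, e_G)` is a tangent vector for any C¹ `G`. -/
lemma xiG_isTan (hπ : ContDiff ℝ (⊤ : ℕ∞) π)
    (hskew : ∀ y p q, π y p q = -π y q p)
    (hjac : ∀ y s lI kI, ∑ r, (π y r s * pd (fun z => π z lI kI) r y
        + π y r kI * pd (fun z => π z s lI) r y
        + π y r lI * pd (fun z => π z kI s) r y) = 0)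
    (hsol : IsSol π X X' η)
    (hG'c : ContinuousOn G' (Icc 0 1))
    (hG : ∀ u ∈ Icc (0:ℝ) 1, HasDerivWithinAt G (G' u) (Icc 0 1) u) :
    IsTan π X η (xiG π X G) (xiGd π X X' G G') (eG π X η G G') := by
  have hGc : ContinuousOn G (Icc 0 1) := fun u hu => (hG u hu).continuousWithinAt
  have hXc : ContinuousOn X (Icc 0 1) := fun u hu => (hsol.2.2.1 u hu).continuousWithinAt
  refine ⟨cont_xiGd hπ hXc hsol.1 hGc hG'c, cont_eG hπ hXc hsol.2.1 hGc hG'c,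
    hasDeriv_xiG hπ hsol.2.2.1 hG, ?_⟩
  intro u hu i
  have hXr : ∀ r, X' u r = -∑ k, η u k * π (X u) k r := fun r => by
    have := hsol.2.2.2 u hu r; linarith
  have key := tangent_algebra (π (X u)) (fun p q r => pd (fun y => π y p q) r (X u))
    (η u) (G u) (G' u) i (fun p q => hskew (X u) p q)
    (fun p q r => pd_skew hskew p q r (X u)) ?_
  · simp only [xiG, xiGd, eG, hXr]
    convert key using 3
  · intro s lI kI
    have := hjac (X u) s lI kI
    convert this using 2
end Tan

section Main

variable {n : ℕ}

lemma sum_single_mul (c : ℝ) (l₀ : Fin n) (f : Fin n → ℝ) :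
    ∑ i, (Pi.single l₀ c : Fin n → ℝ) i * f i = c * f l₀ := by
  rw [Finset.sum_eq_single l₀]
  · simp
  · intro b _ hb; simp [Pi.single_apply, hb]
  · simp

lemma skew_of_coiso (hn : 1 ≤ n) (π : (Fin n → ℝ) → Fin n → Fin n → ℝ)
    (hπ : ContDiff ℝ (⊤ : ℕ∞) π) (hSC : SolCoisotropic π) :
    ∀ x : Fin n → ℝ, ∀ i j, π x i j = - π x j i := by
  intro x i₀ l₀
  have hsol : IsSol π (fun _ => x) (fun _ => 0) (fun _ => 0) :=
    ⟨continuousOn_const, continuousOn_const,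
     fun u _ => hasDerivWithinAt_const u _ x,
     fun u _ i => by simp⟩
  set G : ℝ → Fin n → ℝ := fun u => (u - u^2) • (Pi.single l₀ 1 : Fin n → ℝ) with hGdef
  set Gd : ℝ → Fin n → ℝ := fun u => (1 - 2*u) • (Pi.single l₀ 1 : Fin n → ℝ) with hGddef
  have hGd'c : ContinuousOn Gd (Icc 0 1) :=
    (Continuous.smul (f := fun u : ℝ => 1 - 2*u) (by continuity) continuous_const).continuousOn
  have hG : ∀ u ∈ Icc (0:ℝ) 1, HasDerivWithinAt G (Gd u) (Icc 0 1) u := by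
    intro u hu
    have h1 : HasDerivWithinAt (fun v : ℝ => v - v^2) (1 - 2*u) (Icc 0 1) u := by
      have := (hasDerivWithinAt_id u (Icc (0:ℝ) 1)).sub
        ((hasDerivWithinAt_id u (Icc (0:ℝ) 1)).pow 2)
      exact this.congr_deriv (by norm_num)
    exact h1.smul_const _
  have hG0 : G 0 = 0 := by simp [hGdef]
  have hG1 : G 1 = 0 := by norm_num [hGdef]
  have horth : ∀ ξ ξ' e, IsTan π (fun _ => x) (fun _ => 0) ξ ξ' e →
      OmegaFd ξ e (xiG π (fun _ => x) G) (eG π (fun _ => x) (fun _ => 0) G Gd) = 0 := by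
    intro ξ ξ' e htan
    rw [omega_fwd hsol htan hGd'c hG, hG0, hG1]
    simp
  have htan := hSC _ _ _ hsol _ _ _
    (cont_xiGd hπ continuousOn_const continuousOn_const
      (fun u hu => (hG u hu).continuousWithinAt) hGd'c)
    (cont_eG hπ continuousOn_const continuousOn_const
      (fun u hu => (hG u hu).continuousWithinAt) hGd'c)
    (hasDeriv_xiG hπ (fun u _ => hasDerivWithinAt_const u _ x) hG) horth
  have heq := htan.2.2.2 0 (by norm_num) i₀
  simp only [xiGd, eG, hGdef, hGddef, Pi.smul_apply, smul_eq_mul] at heq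
  norm_num at heq
  rw [show (∑ m, π x i₀ m * (Pi.single l₀ 1 : Fin n → ℝ) m)
      = ∑ m, (Pi.single l₀ 1 : Fin n → ℝ) m * π x i₀ m from
    Finset.sum_congr rfl fun m _ => mul_comm _ _, sum_single_mul, sum_single_mul] at heq
  linarith

end Main

lemma jac_of_coiso {n : ℕ} (π : (Fin n → ℝ) → Fin n → Fin n → ℝ)
    (hπ : ContDiff ℝ (⊤ : ℕ∞) π) (hSC : SolCoisotropic π)
    (hskew : ∀ y : Fin n → ℝ, ∀ p q, π y p q = -π y q p) :
    ∀ x : Fin n → ℝ, ∀ s l k,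
      ∑ r, (π x r s * pd (fun y => π y l k) r x
        + π x r k * pd (fun y => π y s l) r x
        + π x r l * pd (fun y => π y k s) r x) = 0 := by
  intro x s lJ kJ
  -- the Hamiltonian-type vector field
  set g : (Fin n → ℝ) → (Fin n → ℝ) := fun y r => -π y s r with hgdef
  have hgc : ContDiff ℝ 1 g :=
    contDiff_pi.mpr fun r => ((entry_contDiff hπ s r).neg).of_le (by simp)
  obtain ⟨α, hα0, ε, hε, hαd⟩ := ContDiffAt.exists_forall_mem_closedBall_exists_eq_forall_mem_Ioo_hasDerivAt₀ (hgc.contDiffAt (x := x)) 0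
  set X : ℝ → Fin n → ℝ := fun u => α (ε * (u - 1/2)) with hXdef
  set X' : ℝ → Fin n → ℝ := fun u => ε • g (X u) with hX'def
  set η : ℝ → Fin n → ℝ := fun _ => (Pi.single s ε : Fin n → ℝ) with hηdef
  have hmem : ∀ u ∈ Icc (0:ℝ) 1, ε * (u - 1/2) ∈ Ioo (0 - ε) (0 + ε) := by
    intro u hu
    constructor <;> nlinarith [hu.1, hu.2, hε]
  have hXd : ∀ u ∈ Icc (0:ℝ) 1, HasDerivWithinAt X (X' u) (Icc 0 1) u := by
    intro u hu
    have h1 : HasDerivAt (fun v : ℝ => ε * (v - 1/2)) ε u := by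
      exact (((hasDerivAt_id u).sub_const (1/2)).const_mul ε).congr_deriv (by ring)
    have h2 := (hαd _ (hmem u hu)).scomp u h1
    exact h2.hasDerivWithinAt
  have hXc : ContinuousOn X (Icc 0 1) := fun u hu => (hXd u hu).continuousWithinAt
  have hgcont : Continuous g := continuous_pi fun r => (entry_contDiff hπ s r).continuous.neg
  have hX'c : ContinuousOn X' (Icc 0 1) :=
    (hgcont.comp_continuousOn hXc).const_smul ε
  have hsol : IsSol π X X' η := by
    refine ⟨hX'c, continuousOn_const, hXd, ?_⟩
    intro u _ i
    have : (∑ j, η u j * π (X u) j i) = ε * π (X u) s i := by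
      rw [hηdef]; exact sum_single_mul ε s _
    rw [this, hX'def]
    simp [hgdef]
  -- the bump profile
  set φ : ℝ → ℝ := fun u => 16*u^2*(1-u)^2 with hφdef
  set φd : ℝ → ℝ := fun u => 16*(2*u)*(1-u)^2 + 16*u^2*(2*(1-u)*(-1)) with hφddef
  have hφ : ∀ u : ℝ, HasDerivAt φ (φd u) u := by
    intro u
    have h1 : HasDerivAt (fun v:ℝ => 16*v^2) (16*(2*u)) u := by
      simpa using (hasDerivAt_pow 2 u).const_mul 16
    have h2 : HasDerivAt (fun v:ℝ => (1-v)^2) (2*(1-u)*(-1)) u := by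
      have h0 : HasDerivAt (fun v:ℝ => 1 - v) (-1) u := by
        simpa using (hasDerivAt_id u).const_sub 1
      have := h0.fun_pow 2
      exact this.congr_deriv (by push_cast; ring)
    exact h1.mul h2
  set G : ℝ → Fin n → ℝ := fun u => φ u • (Pi.single lJ 1 : Fin n → ℝ) with hGdef
  set Gd : ℝ → Fin n → ℝ := fun u => φd u • (Pi.single lJ 1 : Fin n → ℝ) with hGddef
  have hG : ∀ u ∈ Icc (0:ℝ) 1, HasDerivWithinAt G (Gd u) (Icc 0 1) u := fun u _ =>
    ((hφ u).hasDerivWithinAt).smul_const _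
  have hφdcont : Continuous φd := by
    rw [hφddef]; fun_prop
  have hGd'c : ContinuousOn Gd (Icc 0 1) := by
    rw [hGddef]
    exact (Continuous.smul hφdcont continuous_const).continuousOn
  have hG0 : G 0 = 0 := by norm_num [hGdef, hφdef]
  have hG1 : G 1 = 0 := by norm_num [hGdef, hφdef]
  have horth : ∀ ξ ξ' e, IsTan π X η ξ ξ' e →
      OmegaFd ξ e (xiG π X G) (eG π X η G Gd) = 0 := by
    intro ξ ξ' e htan
    rw [omega_fwd hsol htan hGd'c hG, hG0, hG1]
    simp
  have htan := hSC _ _ _ hsol _ _ _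
    (cont_xiGd hπ hXc hX'c (fun u hu => (hG u hu).continuousWithinAt) hGd'c)
    (cont_eG hπ hXc continuousOn_const (fun u hu => (hG u hu).continuousWithinAt) hGd'c)
    (hasDeriv_xiG hπ hXd hG) horth
  have heq := htan.2.2.2 (1/2) (by norm_num) kJ
  have hX12 : X (1/2) = x := by
    rw [hXdef]; norm_num [hα0]
  have hφ12 : φ (1/2) = 1 := by norm_num [hφdef]
  have hφd12 : φd (1/2) = 0 := by norm_num [hφddef]
  simp only [xiGd, eG, xiG, hGdef, hGddef, hηdef, hX'def, hX12, hφ12, hφd12, hgdef,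
    Pi.smul_apply, smul_eq_mul, one_smul, mul_zero, zero_mul, mul_one, add_zero, sub_zero,
    one_mul] at heq
  simp only [Pi.single_apply, ite_mul, mul_ite, mul_zero, zero_mul, Finset.sum_ite_eq',
    Finset.sum_ite_eq, Finset.mem_univ, if_true] at heq
  rw [Finset.sum_comm] at heq
  simp only [Pi.single_apply, ite_mul, mul_ite, mul_zero, zero_mul, Finset.sum_ite_eq',
    Finset.sum_ite_eq, Finset.mem_univ, if_true, mul_one] at heq
  have hsum : ∑ r, (-(pd (fun y => π y kJ lJ) r x * (ε * -π x s r))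
      + ε * pd (fun y => π y s kJ) r x * -π x r lJ
      + ε * pd (fun y => π y s lJ) r x * π x r kJ) = 0 := by
    rw [Finset.sum_add_distrib, Finset.sum_add_distrib, Finset.sum_neg_distrib]
    linarith [heq]
  have hF : ∀ r, -(pd (fun y => π y kJ lJ) r x * (ε * -π x s r))
      + ε * pd (fun y => π y s kJ) r x * -π x r lJ
      + ε * pd (fun y => π y s lJ) r x * π x r kJ
      = ε * (π x r s * pd (fun y => π y lJ kJ) r x
        + π x r kJ * pd (fun y => π y s lJ) r x
        + π x r lJ * pd (fun y => π y kJ s) r x) := by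
    intro r
    rw [pd_skew hskew kJ lJ r x, pd_skew hskew s kJ r x, hskew x s r]
    ring
  rw [Finset.sum_congr rfl (fun r _ => hF r), ← Finset.mul_sum] at hsum
  exact (mul_eq_zero.mp hsum).resolve_left (ne_of_gt hε)

lemma coiso_of_poisson {n : ℕ} (π : (Fin n → ℝ) → Fin n → Fin n → ℝ)
    (hπ : ContDiff ℝ (⊤ : ℕ∞) π)
    (hskew : ∀ x : Fin n → ℝ, ∀ p q, π x p q = -π x q p)
    (hjac : ∀ x : Fin n → ℝ, ∀ s l k,
      ∑ r, (π x r s * pd (fun y => π y l k) r x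
        + π x r k * pd (fun y => π y s l) r x
        + π x r l * pd (fun y => π y k s) r x) = 0) :
    SolCoisotropic π := by
  intro X X' η hsol ξt ξt' et hξt'c hetc hξtd horth
  refine ⟨hξt'c, hetc, hξtd, ?_⟩
  have hXc : ContinuousOn X (Icc 0 1) := fun u hu => (hsol.2.2.1 u hu).continuousWithinAt
  have hξtc : ContinuousOn ξt (Icc 0 1) := fun u hu => (hξtd u hu).continuousWithinAt
  set F : ℝ → Fin n → ℝ := fun u l => ξt' u l
      + (∑ j, ∑ i, η u j * pd (fun y => π y j l) i (X u) * ξt u i)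
      + ∑ j, et u j * π (X u) j l with hFdef
  have hFc : ∀ l, ContinuousOn (fun u => F u l) (Icc 0 1) := by
    intro l
    refine ContinuousOn.add (ContinuousOn.add ((continuousOn_pi.mp hξt'c) l) ?_) ?_
    · exact continuousOn_finset_sum _ fun j _ => continuousOn_finset_sum _ fun i _ =>
        (((continuousOn_pi.mp hsol.2.1) j).mul
          ((pd_continuous (entry_contDiff hπ j l) i).comp_continuousOn hXc)).mul
          ((continuousOn_pi.mp hξtc) i)
    · exact continuousOn_finset_sum _ fun j _ =>
        ((continuousOn_pi.mp hetc) j).mul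
          ((entry_contDiff hπ j l).continuous.comp_continuousOn hXc)
  have hF0 : ∀ l, ∀ u ∈ Icc (0:ℝ) 1, F u l = 0 := by
    intro l
    refine dbr (hFc l) ?_
    intro φ φdd hφdc hφd hφ0 hφ1
    set G : ℝ → Fin n → ℝ := fun u => φ u • (Pi.single l 1 : Fin n → ℝ) with hGdef
    set Gd : ℝ → Fin n → ℝ := fun u => φdd u • (Pi.single l 1 : Fin n → ℝ) with hGddef
    have hG : ∀ u ∈ Icc (0:ℝ) 1, HasDerivWithinAt G (Gd u) (Icc 0 1) u := fun u hu =>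
      (hφd u hu).smul_const _
    have hGd'c : ContinuousOn Gd (Icc 0 1) := by
      rw [hGddef]; exact hφdc.smul continuousOn_const
    have htanG := xiG_isTan hπ hskew hjac hsol hGd'c hG
    have h0 := horth _ _ _ htanG
    rw [omega_bwd hπ hsol hξt'c hetc hξtd hGd'c hG] at h0
    have hb : (∑ i, G 1 i * ξt 1 i) - ∑ i, G 0 i * ξt 0 i = 0 := by
      simp [hGdef, hφ0, hφ1]
    rw [hb, sub_zero] at h0
    refine Eq.trans ?_ h0
    refine intervalIntegral.integral_congr fun u _ => ?_
    simp only [hGdef, hFdef, Pi.smul_apply, smul_eq_mul, Pi.single_apply, mul_ite, ite_mul,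
      mul_one, mul_zero, zero_mul, Finset.sum_ite_eq', Finset.mem_univ, if_true]
  intro u hu i
  exact hF0 i u hu

/-- Theorem 1 of the paper (for target `ℝⁿ`): `Sol(π)` is coisotropic iff `π` is a
Poisson bivector field, i.e. `π(x)` is skew-symmetric for all `x` and the Jacobi
identity holds. -/
theorem sol_coisotropic_iff_poisson (n : ℕ) (hn : 1 ≤ n)
    (π : (Fin n → ℝ) → Fin n → Fin n → ℝ) (hπ : ContDiff ℝ (⊤ : ℕ∞) π) :
    SolCoisotropic π ↔
      ((∀ x : Fin n → ℝ, ∀ i j, π x i j = - π x j i) ∧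
       (∀ x : Fin n → ℝ, ∀ s l k,
          ∑ r, (π x r s * pd (fun y => π y l k) r x
            + π x r k * pd (fun y => π y s l) r x
            + π x r l * pd (fun y => π y k s) r x) = 0)) := by
  
  constructor
  · intro hSC
    have hsk := skew_of_coiso hn π hπ hSC
    exact ⟨hsk, jac_of_coiso π hπ hSC hsk⟩
  · rintro ⟨hsk, hjac⟩
    exact coiso_of_poisson π hπ hsk hjac
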